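/- With $\chi$ and $\tilde{\eta}$ as in the cumulant generating function setup, the Laplacian of $\chi$ satisfies $\frac{\partial^2 \chi}{\partial \Re[u]^2} + \frac{\partial^2 \chi}{\partial \Im[u]^2} = \frac{2}{v} \mathbb{E}\left[|x - \tilde{\eta}(u)|^2 \mid u\right]$, i.e., the posterior variance of $x$ given the AWGN observation $u$, scaled by $2/v$. -/

import Mathlib

open MeasureTheory

/-- The (scaled) cumulant generating function of the posterior distribution of
`x` under the AWGN observation `u = x + z`, `z ∼ CN(0,v)`, where `μ` is the
prior distribution of `x`. -/
noncomputable def chiFun (μ : Measure ℂ) (v : ℝ) (u : ℂ) : ℝ :=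
  v / 2 * Real.log (∫ x, Real.exp (-‖u - x‖ ^ 2 / v) ∂μ) + ‖u‖ ^ 2 / 2

/-- The posterior mean of `x` given the AWGN observation `u = x + z`. -/
noncomputable def etaTilde (μ : Measure ℂ) (v : ℝ) (u : ℂ) : ℂ :=
  (∫ x, (Real.exp (-‖u - x‖ ^ 2 / v) : ℂ) * x ∂μ) /
    ((∫ x, Real.exp (-‖u - x‖ ^ 2 / v) ∂μ : ℝ) : ℂ)

/-- The posterior variance of `x` given the AWGN observation `u`. -/
noncomputable def postVar (μ : Measure ℂ) (v : ℝ) (u : ℂ) : ℝ :=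
  (∫ x, Real.exp (-‖u - x‖ ^ 2 / v) * ‖x - etaTilde μ v u‖ ^ 2 ∂μ) /
    (∫ x, Real.exp (-‖u - x‖ ^ 2 / v) ∂μ)

namespace ChiAux

open Real Metric

lemma sq_mul_exp_le {v : ℝ} (hv : 0 < v) (t : ℝ) : t ^ 2 * Real.exp (-(t ^ 2) / v) ≤ v := by
  have h1 : t ^ 2 ≤ v * Real.exp (t ^ 2 / v) := by
    have h := Real.add_one_le_exp (t ^ 2 / v)
    have h' := mul_le_mul_of_nonneg_left h hv.le
    rw [mul_add, mul_div_cancel₀ _ hv.ne'] at h'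
    linarith
  have h2 : Real.exp (-(t ^ 2) / v) = (Real.exp (t ^ 2 / v))⁻¹ := by
    rw [← Real.exp_neg]; ring_nf
  rw [h2, mul_inv_le_iff₀ (Real.exp_pos _)]
  linarith

lemma exp_mono {v : ℝ} (hv : 0 < v) {t d : ℝ} (hd : 0 ≤ d) :
    Real.exp (-(t ^ 2 + d) / v) ≤ Real.exp (-(t ^ 2) / v) := by
  apply Real.exp_le_exp.2
  gcongr
  linarith

lemma sq_mul_exp_le' {v : ℝ} (hv : 0 < v) {t d : ℝ} (hd : 0 ≤ d) :
    t ^ 2 * Real.exp (-(t ^ 2 + d) / v) ≤ v := by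
  have := exp_mono hv hd (t := t)
  nlinarith [sq_mul_exp_le hv t, sq_nonneg t, Real.exp_pos (-(t^2+d)/v)]

lemma exp_le_one {v : ℝ} (hv : 0 < v) (t d : ℝ) (hd : 0 ≤ d) :
    Real.exp (-(t ^ 2 + d) / v) ≤ 1 := by
  apply Real.exp_le_one_iff.2
  apply div_nonpos_of_nonpos_of_nonneg (by nlinarith [sq_nonneg t]) hv.le

lemma abs_mul_exp_le {v : ℝ} (hv : 0 < v) {t d : ℝ} (hd : 0 ≤ d) :
    |t| * Real.exp (-(t ^ 2 + d) / v) ≤ Real.sqrt v := by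
  have h1 : (|t| * Real.exp (-(t ^ 2 + d) / v)) ^ 2 ≤ v := by
    have he1 : Real.exp (-(t ^ 2 + d) / v) ≤ 1 := exp_le_one hv t d hd
    have := sq_mul_exp_le' hv hd (t := t)
    have hp := Real.exp_pos (-(t ^ 2 + d) / v)
    calc (|t| * Real.exp (-(t ^ 2 + d) / v)) ^ 2
        = t ^ 2 * Real.exp (-(t ^ 2 + d) / v) * Real.exp (-(t ^ 2 + d) / v) := by
          rw [mul_pow, sq_abs]; ring
      _ ≤ v := by nlinarith
  have h0 : 0 ≤ |t| * Real.exp (-(t ^ 2 + d) / v) := by positivity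
  exact (Real.le_sqrt h0 hv.le).2 h1

lemma kernel_hasDerivAt {v : ℝ} (c d s : ℝ) :
    HasDerivAt (fun s : ℝ => Real.exp (-((s - c) ^ 2 + d) / v))
      (-2 * (s - c) / v * Real.exp (-((s - c) ^ 2 + d) / v)) s := by
  have h : HasDerivAt (fun s : ℝ => -((s - c) ^ 2 + d) / v) (-2 * (s - c) / v) s := by
    have h1 : HasDerivAt (fun s : ℝ => s - c) 1 s := (hasDerivAt_id s).sub_const c
    have h2 := ((h1.pow 2).add_const d).neg.div_const v
    refine h2.congr_deriv ?_
    push_cast; ring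
  simpa [mul_comm] using h.exp

lemma kernel2_hasDerivAt {v : ℝ} (c d s : ℝ) :
    HasDerivAt (fun s : ℝ => -2 * (s - c) / v * Real.exp (-((s - c) ^ 2 + d) / v))
      ((4 * (s - c) ^ 2 / v ^ 2 - 2 / v) * Real.exp (-((s - c) ^ 2 + d) / v)) s := by
  have h1 : HasDerivAt (fun s : ℝ => -2 * (s - c) / v) (-2 / v) s := by
    have := (((hasDerivAt_id s).sub_const c).const_mul (-2 : ℝ)).div_const v
    refine this.congr_deriv ?_; ring
  have h2 := kernel_hasDerivAt (v := v) c d s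
  have := h1.mul h2
  refine this.congr_deriv ?_; ring

variable {μ : Measure ℂ} [IsProbabilityMeasure μ] {v : ℝ} {a b : ℂ → ℝ}

lemma integrable_of_bound {f : ℂ → ℝ} (hf : AEStronglyMeasurable f μ) (C : ℝ)
    (h : ∀ x, |f x| ≤ C) : Integrable f μ :=
  Integrable.mono' (integrable_const C) hf (Filter.Eventually.of_forall (by simpa using h))

lemma meas_w (ha : Measurable a) (hb : Measurable b) (s : ℝ) :
    Measurable (fun x => Real.exp (-((s - a x) ^ 2 + b x) / v)) := by
  fun_prop

lemma meas_w1 (ha : Measurable a) (hb : Measurable b) (s : ℝ) :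
    Measurable (fun x => -2 * (s - a x) / v * Real.exp (-((s - a x) ^ 2 + b x) / v)) := by
  fun_prop

lemma meas_w2 (ha : Measurable a) (hb : Measurable b) (s : ℝ) :
    Measurable (fun x =>
      (4 * (s - a x) ^ 2 / v ^ 2 - 2 / v) * Real.exp (-((s - a x) ^ 2 + b x) / v)) := by
  fun_prop

lemma integrable_w (hv : 0 < v) (ha : Measurable a) (hb : Measurable b)
    (hb0 : ∀ x, 0 ≤ b x) (s : ℝ) :
    Integrable (fun x => Real.exp (-((s - a x) ^ 2 + b x) / v)) μ := by
  apply integrable_of_bound (meas_w ha hb s).aestronglyMeasurable 1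
  intro x
  rw [abs_of_pos (Real.exp_pos _)]
  exact exp_le_one hv _ _ (hb0 x)

lemma Z_hasDerivAt (hv : 0 < v) (ha : Measurable a) (hb : Measurable b)
    (hb0 : ∀ x, 0 ≤ b x) (s : ℝ) :
    HasDerivAt (fun s : ℝ => ∫ x, Real.exp (-((s - a x) ^ 2 + b x) / v) ∂μ)
      (∫ x, -2 * (s - a x) / v * Real.exp (-((s - a x) ^ 2 + b x) / v) ∂μ) s := by
  refine (hasDerivAt_integral_of_dominated_loc_of_deriv_le (s := Metric.ball s 1) (Metric.ball_mem_nhds s one_pos)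
    (F := fun s x => Real.exp (-((s - a x) ^ 2 + b x) / v))
    (F' := fun s x => -2 * (s - a x) / v * Real.exp (-((s - a x) ^ 2 + b x) / v))
    (bound := fun _ => 2 / v * Real.sqrt v)
    (Filter.Eventually.of_forall fun t => (meas_w ha hb t).aestronglyMeasurable)
    (integrable_w hv ha hb hb0 s)
    ((meas_w1 ha hb s).aestronglyMeasurable)
    (Filter.Eventually.of_forall fun x t _ => ?_)
    (integrable_const _)
    (Filter.Eventually.of_forall fun x t _ => kernel_hasDerivAt (a x) (b x) t)).2
  have h := abs_mul_exp_le hv (hb0 x) (t := t - a x)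
  rw [Real.norm_eq_abs, abs_mul, abs_div, abs_mul]
  have hv' : |v| = v := abs_of_pos hv
  rw [hv', abs_of_pos (Real.exp_pos _)]
  calc |(-2 : ℝ)| * |t - a x| / v * Real.exp (-((t - a x) ^ 2 + b x) / v)
      = 2 / v * (|t - a x| * Real.exp (-((t - a x) ^ 2 + b x) / v)) := by
        rw [abs_neg, abs_two]; ring
    _ ≤ 2 / v * Real.sqrt v := by
        apply mul_le_mul_of_nonneg_left h (by positivity)

lemma Z1_hasDerivAt (hv : 0 < v) (ha : Measurable a) (hb : Measurable b)
    (hb0 : ∀ x, 0 ≤ b x) (s : ℝ) :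
    HasDerivAt (fun s : ℝ => ∫ x, -2 * (s - a x) / v * Real.exp (-((s - a x) ^ 2 + b x) / v) ∂μ)
      (∫ x, (4 * (s - a x) ^ 2 / v ^ 2 - 2 / v) * Real.exp (-((s - a x) ^ 2 + b x) / v) ∂μ) s := by
  refine (hasDerivAt_integral_of_dominated_loc_of_deriv_le (s := Metric.ball s 1) (Metric.ball_mem_nhds s one_pos)
    (F := fun s x => -2 * (s - a x) / v * Real.exp (-((s - a x) ^ 2 + b x) / v))
    (F' := fun s x => (4 * (s - a x) ^ 2 / v ^ 2 - 2 / v) * Real.exp (-((s - a x) ^ 2 + b x) / v))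
    (bound := fun _ => 4 / v + 2 / v)
    (Filter.Eventually.of_forall fun t => (meas_w1 ha hb t).aestronglyMeasurable)
    ?_
    ((meas_w2 ha hb s).aestronglyMeasurable)
    (Filter.Eventually.of_forall fun x t _ => ?_)
    (integrable_const _)
    (Filter.Eventually.of_forall fun x t _ => kernel2_hasDerivAt (a x) (b x) t)).2
  · apply integrable_of_bound (meas_w1 ha hb s).aestronglyMeasurable (2 / v * Real.sqrt v)
    intro x
    have h := abs_mul_exp_le hv (hb0 x) (t := s - a x)
    rw [abs_mul, abs_div, abs_mul, abs_of_pos hv, abs_of_pos (Real.exp_pos _), abs_neg, abs_two]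
    calc 2 * |s - a x| / v * Real.exp (-((s - a x) ^ 2 + b x) / v)
        = 2 / v * (|s - a x| * Real.exp (-((s - a x) ^ 2 + b x) / v)) := by ring
      _ ≤ 2 / v * Real.sqrt v := mul_le_mul_of_nonneg_left h (by positivity)
  · have h1 := sq_mul_exp_le' hv (hb0 x) (t := t - a x)
    have h2 := exp_le_one hv (t - a x) (b x) (hb0 x)
    have hp := Real.exp_pos (-((t - a x) ^ 2 + b x) / v)
    rw [Real.norm_eq_abs, abs_mul, abs_of_pos hp]
    have hb' : |4 * (t - a x) ^ 2 / v ^ 2 - 2 / v| ≤ 4 * (t - a x) ^ 2 / v ^ 2 + 2 / v := by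
      calc |4 * (t - a x) ^ 2 / v ^ 2 - 2 / v| ≤ |4 * (t - a x) ^ 2 / v ^ 2| + |2 / v| :=
            abs_sub _ _
        _ = 4 * (t - a x) ^ 2 / v ^ 2 + 2 / v := by
            rw [abs_of_nonneg (by positivity), abs_of_nonneg (by positivity)]
    calc |4 * (t - a x) ^ 2 / v ^ 2 - 2 / v| * Real.exp (-((t - a x) ^ 2 + b x) / v)
        ≤ (4 * (t - a x) ^ 2 / v ^ 2 + 2 / v) * Real.exp (-((t - a x) ^ 2 + b x) / v) := by
          apply mul_le_mul_of_nonneg_right hb' hp.le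
      _ = 4 / v ^ 2 * ((t - a x) ^ 2 * Real.exp (-((t - a x) ^ 2 + b x) / v))
            + 2 / v * Real.exp (-((t - a x) ^ 2 + b x) / v) := by ring
      _ ≤ 4 / v ^ 2 * v + 2 / v * 1 := by
          have h4 : (0:ℝ) ≤ 4 / v ^ 2 := by positivity
          have h5 : (0:ℝ) ≤ 2 / v := by positivity
          nlinarith
      _ = 4 / v + 2 / v := by field_simp

lemma Z_pos (hv : 0 < v) (ha : Measurable a) (hb : Measurable b)
    (hb0 : ∀ x, 0 ≤ b x) (s : ℝ) :
    0 < ∫ x, Real.exp (-((s - a x) ^ 2 + b x) / v) ∂μ := by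
  rw [integral_pos_iff_support_of_nonneg_ae
    (Filter.Eventually.of_forall fun x => (Real.exp_pos _).le)
    (integrable_w hv ha hb hb0 s)]
  have h : (Function.support fun x => Real.exp (-((s - a x) ^ 2 + b x) / v)) = Set.univ := by
    ext x; simp [Function.support, (Real.exp_pos _).ne']
  rw [h]
  simp

lemma deriv2_chiLine (hv : 0 < v) (ha : Measurable a) (hb : Measurable b)
    (hb0 : ∀ x, 0 ≤ b x) (k s : ℝ) :
    deriv (deriv (fun s : ℝ =>
      v / 2 * Real.log (∫ x, Real.exp (-((s - a x) ^ 2 + b x) / v) ∂μ) + (s ^ 2 + k) / 2)) s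
    = v / 2 *
        (((∫ x, (4 * (s - a x) ^ 2 / v ^ 2 - 2 / v) * Real.exp (-((s - a x) ^ 2 + b x) / v) ∂μ)
            * (∫ x, Real.exp (-((s - a x) ^ 2 + b x) / v) ∂μ)
          - (∫ x, -2 * (s - a x) / v * Real.exp (-((s - a x) ^ 2 + b x) / v) ∂μ) ^ 2)
          / (∫ x, Real.exp (-((s - a x) ^ 2 + b x) / v) ∂μ) ^ 2) + 1 := by
  have hfst : deriv (fun s : ℝ =>
      v / 2 * Real.log (∫ x, Real.exp (-((s - a x) ^ 2 + b x) / v) ∂μ) + (s ^ 2 + k) / 2)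
      = fun t : ℝ =>
        v / 2 * ((∫ x, -2 * (t - a x) / v * Real.exp (-((t - a x) ^ 2 + b x) / v) ∂μ)
          / (∫ x, Real.exp (-((t - a x) ^ 2 + b x) / v) ∂μ)) + t := by
    funext t
    have hZ := Z_hasDerivAt (μ := μ) hv ha hb hb0 t
    have hlog := hZ.log (Z_pos (μ := μ) hv ha hb hb0 t).ne'
    have hq : HasDerivAt (fun s : ℝ => (s ^ 2 + k) / 2) t t := by
      have := ((hasDerivAt_pow 2 t).add_const k).div_const 2
      refine this.congr_deriv ?_
      push_cast; ring
    exact ((hlog.const_mul (v / 2)).add hq).deriv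
  rw [hfst]
  have hdiv := (Z1_hasDerivAt (μ := μ) hv ha hb hb0 s).div (Z_hasDerivAt (μ := μ) hv ha hb hb0 s)
    (Z_pos (μ := μ) hv ha hb hb0 s).ne'
  have h := ((hdiv.const_mul (v / 2)).add (hasDerivAt_id' (x := s))).deriv
  refine h.trans ?_
  ring

omit [IsProbabilityMeasure μ] in
lemma integral_comb2 {f1 f2 : ℂ → ℝ} (h1 : Integrable f1 μ) (h2 : Integrable f2 μ)
    (c1 c2 : ℝ) :
    ∫ x, (c1 * f1 x + c2 * f2 x) ∂μ = c1 * ∫ x, f1 x ∂μ + c2 * ∫ x, f2 x ∂μ := by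
  rw [integral_add (h1.const_mul c1) (h2.const_mul c2), integral_const_mul, integral_const_mul]

omit [IsProbabilityMeasure μ] in
lemma integral_comb3 {f1 f2 f3 : ℂ → ℝ} (h1 : Integrable f1 μ) (h2 : Integrable f2 μ)
    (h3 : Integrable f3 μ) (c1 c2 c3 : ℝ) :
    ∫ x, (c1 * f1 x + c2 * f2 x + c3 * f3 x) ∂μ
      = c1 * ∫ x, f1 x ∂μ + c2 * ∫ x, f2 x ∂μ + c3 * ∫ x, f3 x ∂μ := by
  rw [integral_add (f := fun x => c1 * f1 x + c2 * f2 x) (g := fun x => c3 * f3 x)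
      ((h1.const_mul c1).add (h2.const_mul c2)) (h3.const_mul c3),
    integral_comb2 h1 h2, integral_const_mul]

omit [IsProbabilityMeasure μ] in
lemma integral_comb5 {f1 f2 f3 f4 f5 : ℂ → ℝ} (h1 : Integrable f1 μ) (h2 : Integrable f2 μ)
    (h3 : Integrable f3 μ) (h4 : Integrable f4 μ) (h5 : Integrable f5 μ) (c1 c2 c3 c4 c5 : ℝ) :
    ∫ x, (c1 * f1 x + c2 * f2 x + c3 * f3 x + c4 * f4 x + c5 * f5 x) ∂μ
      = c1 * ∫ x, f1 x ∂μ + c2 * ∫ x, f2 x ∂μ + c3 * ∫ x, f3 x ∂μ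
        + c4 * ∫ x, f4 x ∂μ + c5 * ∫ x, f5 x ∂μ := by
  rw [integral_add (f := fun x => c1 * f1 x + c2 * f2 x + c3 * f3 x + c4 * f4 x)
      (g := fun x => c5 * f5 x)
      ((((h1.const_mul c1).add (h2.const_mul c2)).add (h3.const_mul c3)).add (h4.const_mul c4))
      (h5.const_mul c5),
    integral_add (f := fun x => c1 * f1 x + c2 * f2 x + c3 * f3 x) (g := fun x => c4 * f4 x)
      (((h1.const_mul c1).add (h2.const_mul c2)).add (h3.const_mul c3)) (h4.const_mul c4),
    integral_comb3 h1 h2 h3, integral_const_mul, integral_const_mul]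

lemma normsq_line (s t : ℝ) (x : ℂ) :
    ‖(↑s + ↑t * Complex.I) - x‖ ^ 2 = (s - x.re) ^ 2 + (t - x.im) ^ 2 := by
  simp [Complex.sq_norm, Complex.normSq_apply]
  ring

lemma normsq_line' (t s : ℝ) (x : ℂ) :
    ‖(↑t + ↑s * Complex.I) - x‖ ^ 2 = (s - x.im) ^ 2 + (t - x.re) ^ 2 := by
  simp [Complex.sq_norm, Complex.normSq_apply]
  ring

lemma norm_line (s t : ℝ) : ‖((s : ℂ) + (t : ℂ) * Complex.I)‖ ^ 2 = s ^ 2 + t ^ 2 := by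
  simp [Complex.sq_norm, Complex.normSq_apply]
  ring

lemma norm_line' (t s : ℝ) : ‖((t : ℂ) + (s : ℂ) * Complex.I)‖ ^ 2 = s ^ 2 + t ^ 2 := by
  simp [Complex.sq_norm, Complex.normSq_apply]
  ring

lemma normsq_c (u x : ℂ) : ‖u - x‖ ^ 2 = (u.re - x.re) ^ 2 + (u.im - x.im) ^ 2 := by
  simp [Complex.sq_norm, Complex.normSq_apply]
  ring

lemma normsq_gen (z : ℂ) : ‖z‖ ^ 2 = z.re ^ 2 + z.im ^ 2 := by
  simp [Complex.sq_norm, Complex.normSq_apply]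
  ring

end ChiAux

set_option maxHeartbeats 2000000 in
open ChiAux in
/-- The Laplacian of the cumulant generating function `χ` equals `2/v` times
the posterior variance of `x` given the AWGN observation `u`. -/
theorem chi_laplacian_is_posterior_variance (μ : Measure ℂ) [IsProbabilityMeasure μ]
    (hdens : μ ≪ MeasureTheory.volume)
    (h4 : Integrable (fun x : ℂ => ‖x‖ ^ 4) μ) (v : ℝ) (hv : 0 < v) (u : ℂ) :
    deriv (deriv (fun s : ℝ => chiFun μ v ((s : ℂ) + (u.im : ℂ) * Complex.I))) u.re +
      deriv (deriv (fun s : ℝ => chiFun μ v ((u.re : ℂ) + (s : ℂ) * Complex.I))) u.im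
      = 2 / v * postVar μ v u := by
  have hb1 : Measurable fun x : ℂ => (u.im - x.im) ^ 2 := by fun_prop
  have hb2 : Measurable fun x : ℂ => (u.re - x.re) ^ 2 := by fun_prop
  have hb01 : ∀ x : ℂ, (0:ℝ) ≤ (u.im - x.im) ^ 2 := fun x => sq_nonneg _
  have hb02 : ∀ x : ℂ, (0:ℝ) ≤ (u.re - x.re) ^ 2 := fun x => sq_nonneg _
  -- the swap of the two squares in the exponent
  have hswap : ∀ x : ℂ, Real.exp (-((u.im - x.im) ^ 2 + (u.re - x.re) ^ 2) / v)
      = Real.exp (-((u.re - x.re) ^ 2 + (u.im - x.im) ^ 2) / v) := fun x => by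
    rw [add_comm]
  have hwc : ∀ x : ℂ, Real.exp (-‖u - x‖ ^ 2 / v)
      = Real.exp (-((u.re - x.re) ^ 2 + (u.im - x.im) ^ 2) / v) := fun x => by
    rw [normsq_c]
  -- basic facts about the weight
  have hW1 : ∀ x : ℂ, Real.exp (-((u.re - x.re) ^ 2 + (u.im - x.im) ^ 2) / v) ≤ 1 :=
    fun x => exp_le_one hv _ _ (hb01 x)
  have hWr : ∀ x : ℂ, |u.re - x.re| * Real.exp (-((u.re - x.re) ^ 2 + (u.im - x.im) ^ 2) / v)
      ≤ Real.sqrt v := fun x => abs_mul_exp_le hv (hb01 x)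
  have hWi : ∀ x : ℂ, |u.im - x.im| * Real.exp (-((u.re - x.re) ^ 2 + (u.im - x.im) ^ 2) / v)
      ≤ Real.sqrt v := fun x => by
    have h := abs_mul_exp_le hv (hb02 x) (t := u.im - x.im)
    rw [show -((u.im - x.im) ^ 2 + (u.re - x.re) ^ 2) / v
        = -((u.re - x.re) ^ 2 + (u.im - x.im) ^ 2) / v from by ring] at h
    exact h
  have hWr2 : ∀ x : ℂ, (u.re - x.re) ^ 2 * Real.exp (-((u.re - x.re) ^ 2 + (u.im - x.im) ^ 2) / v)
      ≤ v := fun x => sq_mul_exp_le' hv (hb01 x)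
  have hWi2 : ∀ x : ℂ, (u.im - x.im) ^ 2 * Real.exp (-((u.re - x.re) ^ 2 + (u.im - x.im) ^ 2) / v)
      ≤ v := fun x => by
    have h := sq_mul_exp_le' hv (hb02 x) (t := u.im - x.im)
    rw [show -((u.im - x.im) ^ 2 + (u.re - x.re) ^ 2) / v
        = -((u.re - x.re) ^ 2 + (u.im - x.im) ^ 2) / v from by ring] at h
    exact h
  -- integrability of the moment integrands
  have hIw : Integrable (fun x : ℂ =>
      Real.exp (-((u.re - x.re) ^ 2 + (u.im - x.im) ^ 2) / v)) μ :=
    integrable_w hv Complex.measurable_re hb1 hb01 u.re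
  have hIrw : Integrable (fun x : ℂ =>
      x.re * Real.exp (-((u.re - x.re) ^ 2 + (u.im - x.im) ^ 2) / v)) μ := by
    apply integrable_of_bound (Measurable.aestronglyMeasurable (by fun_prop)) (|u.re| + Real.sqrt v)
    intro x
    have h1 := hWr x
    have h2 := hW1 x
    have hp := Real.exp_pos (-((u.re - x.re) ^ 2 + (u.im - x.im) ^ 2) / v)
    have h3 : |x.re| ≤ |u.re| + |u.re - x.re| := by
      calc |x.re| = |u.re - (u.re - x.re)| := by ring_nf
        _ ≤ |u.re| + |u.re - x.re| := abs_sub _ _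
    rw [abs_mul, abs_of_pos hp]
    nlinarith [mul_le_mul_of_nonneg_right h3 hp.le,
      mul_le_mul_of_nonneg_left h2 (abs_nonneg u.re)]
  have hIiw : Integrable (fun x : ℂ =>
      x.im * Real.exp (-((u.re - x.re) ^ 2 + (u.im - x.im) ^ 2) / v)) μ := by
    apply integrable_of_bound (Measurable.aestronglyMeasurable (by fun_prop)) (|u.im| + Real.sqrt v)
    intro x
    have h1 := hWi x
    have h2 := hW1 x
    have hp := Real.exp_pos (-((u.re - x.re) ^ 2 + (u.im - x.im) ^ 2) / v)
    have h3 : |x.im| ≤ |u.im| + |u.im - x.im| := by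
      calc |x.im| = |u.im - (u.im - x.im)| := by ring_nf
        _ ≤ |u.im| + |u.im - x.im| := abs_sub _ _
    rw [abs_mul, abs_of_pos hp]
    nlinarith [mul_le_mul_of_nonneg_right h3 hp.le,
      mul_le_mul_of_nonneg_left h2 (abs_nonneg u.im)]
  have hIrrw : Integrable (fun x : ℂ =>
      x.re ^ 2 * Real.exp (-((u.re - x.re) ^ 2 + (u.im - x.im) ^ 2) / v)) μ := by
    apply integrable_of_bound (Measurable.aestronglyMeasurable (by fun_prop)) (2 * u.re ^ 2 + 2 * v)
    intro x
    have h1 := hWr2 x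
    have h2 := hW1 x
    have hp := Real.exp_pos (-((u.re - x.re) ^ 2 + (u.im - x.im) ^ 2) / v)
    have h3 : x.re ^ 2 ≤ 2 * u.re ^ 2 + 2 * (u.re - x.re) ^ 2 := by
      nlinarith [sq_nonneg (2 * u.re - x.re)]
    rw [abs_mul, abs_of_pos hp, abs_of_nonneg (sq_nonneg _)]
    nlinarith [mul_le_mul_of_nonneg_right h3 hp.le,
      mul_le_mul_of_nonneg_left h2 (mul_nonneg (by norm_num : (0:ℝ) ≤ 2) (sq_nonneg u.re))]
  have hIiiw : Integrable (fun x : ℂ =>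
      x.im ^ 2 * Real.exp (-((u.re - x.re) ^ 2 + (u.im - x.im) ^ 2) / v)) μ := by
    apply integrable_of_bound (Measurable.aestronglyMeasurable (by fun_prop)) (2 * u.im ^ 2 + 2 * v)
    intro x
    have h1 := hWi2 x
    have h2 := hW1 x
    have hp := Real.exp_pos (-((u.re - x.re) ^ 2 + (u.im - x.im) ^ 2) / v)
    have h3 : x.im ^ 2 ≤ 2 * u.im ^ 2 + 2 * (u.im - x.im) ^ 2 := by
      nlinarith [sq_nonneg (2 * u.im - x.im)]
    rw [abs_mul, abs_of_pos hp, abs_of_nonneg (sq_nonneg _)]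
    nlinarith [mul_le_mul_of_nonneg_right h3 hp.le,
      mul_le_mul_of_nonneg_left h2 (mul_nonneg (by norm_num : (0:ℝ) ≤ 2) (sq_nonneg u.im))]
  -- positivity of the normalizing constant
  have hD : 0 < ∫ x, Real.exp (-((u.re - x.re) ^ 2 + (u.im - x.im) ^ 2) / v) ∂μ :=
    Z_pos hv Complex.measurable_re hb1 hb01 u.re
  -- the posterior mean
  have hIη : Integrable (fun x : ℂ =>
      ((Real.exp (-((u.re - x.re) ^ 2 + (u.im - x.im) ^ 2) / v) : ℝ) : ℂ) * x) μ := by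
    refine Integrable.mono' (integrable_const (‖u‖ + Real.sqrt v))
      (((Complex.measurable_ofReal.comp
          (show Measurable fun x : ℂ =>
              Real.exp (-((u.re - x.re) ^ 2 + (u.im - x.im) ^ 2) / v) from by fun_prop)).mul
        measurable_id).aestronglyMeasurable)
      (Filter.Eventually.of_forall fun x => ?_)
    have h2 := hW1 x
    have hp := Real.exp_pos (-((u.re - x.re) ^ 2 + (u.im - x.im) ^ 2) / v)
    have h1 : ‖u - x‖ * Real.exp (-((u.re - x.re) ^ 2 + (u.im - x.im) ^ 2) / v)
        ≤ Real.sqrt v := by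
      have h := abs_mul_exp_le hv (le_refl (0:ℝ)) (t := ‖u - x‖)
      rw [show -(‖u - x‖ ^ 2 + 0) / v
          = -((u.re - x.re) ^ 2 + (u.im - x.im) ^ 2) / v from by rw [add_zero, normsq_c],
        abs_of_nonneg (norm_nonneg _)] at h
      exact h
    have h3 : ‖x‖ ≤ ‖u‖ + ‖u - x‖ := by
      calc ‖x‖ = ‖u - (u - x)‖ := by ring_nf
        _ ≤ ‖u‖ + ‖u - x‖ := norm_sub_le _ _
    rw [norm_mul, Complex.norm_real, Real.norm_eq_abs, abs_of_pos hp]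
    nlinarith [mul_le_mul_of_nonneg_right h3 hp.le, norm_nonneg u, norm_nonneg (u - x),
      mul_le_mul_of_nonneg_left h2 (norm_nonneg u)]
  have hηre : (etaTilde μ v u).re
      = (∫ x, x.re * Real.exp (-((u.re - x.re) ^ 2 + (u.im - x.im) ^ 2) / v) ∂μ)
        / ∫ x, Real.exp (-((u.re - x.re) ^ 2 + (u.im - x.im) ^ 2) / v) ∂μ := by
    rw [etaTilde]
    simp only [hwc]
    rw [Complex.div_ofReal_re]
    congr 1
    conv_lhs => rw [← RCLike.re_to_complex]
    rw [← integral_re hIη]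
    apply integral_congr_ae
    filter_upwards with x
    simp only [RCLike.re_to_complex, Complex.mul_re, Complex.ofReal_re, Complex.ofReal_im]
    ring
  have hηim : (etaTilde μ v u).im
      = (∫ x, x.im * Real.exp (-((u.re - x.re) ^ 2 + (u.im - x.im) ^ 2) / v) ∂μ)
        / ∫ x, Real.exp (-((u.re - x.re) ^ 2 + (u.im - x.im) ^ 2) / v) ∂μ := by
    rw [etaTilde]
    simp only [hwc]
    rw [Complex.div_ofReal_im]
    congr 1
    conv_lhs => rw [← RCLike.im_to_complex]
    rw [← integral_im hIη]
    apply integral_congr_ae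
    filter_upwards with x
    simp only [RCLike.im_to_complex, Complex.mul_im, Complex.ofReal_re, Complex.ofReal_im]
    ring
  -- the posterior variance in terms of moments
  have hpost : postVar μ v u =
      ((((∫ x, x.re * Real.exp (-((u.re - x.re) ^ 2 + (u.im - x.im) ^ 2) / v) ∂μ)
          / ∫ x, Real.exp (-((u.re - x.re) ^ 2 + (u.im - x.im) ^ 2) / v) ∂μ) ^ 2
        + ((∫ x, x.im * Real.exp (-((u.re - x.re) ^ 2 + (u.im - x.im) ^ 2) / v) ∂μ)
          / ∫ x, Real.exp (-((u.re - x.re) ^ 2 + (u.im - x.im) ^ 2) / v) ∂μ) ^ 2)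
          * (∫ x, Real.exp (-((u.re - x.re) ^ 2 + (u.im - x.im) ^ 2) / v) ∂μ)
        + (-2 * ((∫ x, x.re * Real.exp (-((u.re - x.re) ^ 2 + (u.im - x.im) ^ 2) / v) ∂μ)
          / ∫ x, Real.exp (-((u.re - x.re) ^ 2 + (u.im - x.im) ^ 2) / v) ∂μ))
          * (∫ x, x.re * Real.exp (-((u.re - x.re) ^ 2 + (u.im - x.im) ^ 2) / v) ∂μ)
        + (-2 * ((∫ x, x.im * Real.exp (-((u.re - x.re) ^ 2 + (u.im - x.im) ^ 2) / v) ∂μ)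
          / ∫ x, Real.exp (-((u.re - x.re) ^ 2 + (u.im - x.im) ^ 2) / v) ∂μ))
          * (∫ x, x.im * Real.exp (-((u.re - x.re) ^ 2 + (u.im - x.im) ^ 2) / v) ∂μ)
        + 1 * (∫ x, x.re ^ 2 * Real.exp (-((u.re - x.re) ^ 2 + (u.im - x.im) ^ 2) / v) ∂μ)
        + 1 * (∫ x, x.im ^ 2 * Real.exp (-((u.re - x.re) ^ 2 + (u.im - x.im) ^ 2) / v) ∂μ))
        / ∫ x, Real.exp (-((u.re - x.re) ^ 2 + (u.im - x.im) ^ 2) / v) ∂μ := by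
    rw [postVar]
    simp only [hwc]
    congr 1
    rw [show (fun x : ℂ => Real.exp (-((u.re - x.re) ^ 2 + (u.im - x.im) ^ 2) / v)
          * ‖x - etaTilde μ v u‖ ^ 2)
        = fun x : ℂ =>
          (((∫ x, x.re * Real.exp (-((u.re - x.re) ^ 2 + (u.im - x.im) ^ 2) / v) ∂μ)
            / ∫ x, Real.exp (-((u.re - x.re) ^ 2 + (u.im - x.im) ^ 2) / v) ∂μ) ^ 2
          + ((∫ x, x.im * Real.exp (-((u.re - x.re) ^ 2 + (u.im - x.im) ^ 2) / v) ∂μ)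
            / ∫ x, Real.exp (-((u.re - x.re) ^ 2 + (u.im - x.im) ^ 2) / v) ∂μ) ^ 2)
            * Real.exp (-((u.re - x.re) ^ 2 + (u.im - x.im) ^ 2) / v)
          + (-2 * ((∫ x, x.re * Real.exp (-((u.re - x.re) ^ 2 + (u.im - x.im) ^ 2) / v) ∂μ)
            / ∫ x, Real.exp (-((u.re - x.re) ^ 2 + (u.im - x.im) ^ 2) / v) ∂μ))
            * (x.re * Real.exp (-((u.re - x.re) ^ 2 + (u.im - x.im) ^ 2) / v))
          + (-2 * ((∫ x, x.im * Real.exp (-((u.re - x.re) ^ 2 + (u.im - x.im) ^ 2) / v) ∂μ)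
            / ∫ x, Real.exp (-((u.re - x.re) ^ 2 + (u.im - x.im) ^ 2) / v) ∂μ))
            * (x.im * Real.exp (-((u.re - x.re) ^ 2 + (u.im - x.im) ^ 2) / v))
          + 1 * (x.re ^ 2 * Real.exp (-((u.re - x.re) ^ 2 + (u.im - x.im) ^ 2) / v))
          + 1 * (x.im ^ 2 * Real.exp (-((u.re - x.re) ^ 2 + (u.im - x.im) ^ 2) / v))
      from funext fun x => by
        rw [normsq_gen (x - etaTilde μ v u), Complex.sub_re, Complex.sub_im, hηre, hηim]
        ring]
    exact integral_comb5 hIw hIrw hIiw hIrrw hIiiw _ _ _ _ _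
  -- the two second derivatives along the coordinate lines
  have hfun1 : (fun s : ℝ => chiFun μ v ((s : ℂ) + (u.im : ℂ) * Complex.I))
      = fun s : ℝ => v / 2 *
          Real.log (∫ x, Real.exp (-((s - x.re) ^ 2 + (u.im - x.im) ^ 2) / v) ∂μ)
          + (s ^ 2 + u.im ^ 2) / 2 := by
    funext s
    rw [chiFun]
    simp only [normsq_line, norm_line]
  have hfun2 : (fun s : ℝ => chiFun μ v ((u.re : ℂ) + (s : ℂ) * Complex.I))
      = fun s : ℝ => v / 2 *
          Real.log (∫ x, Real.exp (-((s - x.im) ^ 2 + (u.re - x.re) ^ 2) / v) ∂μ)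
          + (s ^ 2 + u.re ^ 2) / 2 := by
    funext s
    rw [chiFun]
    simp only [normsq_line', norm_line']
  have hd1 : deriv (deriv (fun s : ℝ => v / 2 *
        Real.log (∫ x, Real.exp (-((s - x.re) ^ 2 + (u.im - x.im) ^ 2) / v) ∂μ)
        + (s ^ 2 + u.im ^ 2) / 2)) u.re
      = v / 2 *
        (((∫ x, (4 * (u.re - x.re) ^ 2 / v ^ 2 - 2 / v)
              * Real.exp (-((u.re - x.re) ^ 2 + (u.im - x.im) ^ 2) / v) ∂μ)
            * (∫ x, Real.exp (-((u.re - x.re) ^ 2 + (u.im - x.im) ^ 2) / v) ∂μ)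
          - (∫ x, -2 * (u.re - x.re) / v
              * Real.exp (-((u.re - x.re) ^ 2 + (u.im - x.im) ^ 2) / v) ∂μ) ^ 2)
          / (∫ x, Real.exp (-((u.re - x.re) ^ 2 + (u.im - x.im) ^ 2) / v) ∂μ) ^ 2) + 1 :=
    deriv2_chiLine hv Complex.measurable_re hb1 hb01 (u.im ^ 2) u.re
  have hd2 : deriv (deriv (fun s : ℝ => v / 2 *
        Real.log (∫ x, Real.exp (-((s - x.im) ^ 2 + (u.re - x.re) ^ 2) / v) ∂μ)
        + (s ^ 2 + u.re ^ 2) / 2)) u.im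
      = v / 2 *
        (((∫ x, (4 * (u.im - x.im) ^ 2 / v ^ 2 - 2 / v)
              * Real.exp (-((u.im - x.im) ^ 2 + (u.re - x.re) ^ 2) / v) ∂μ)
            * (∫ x, Real.exp (-((u.im - x.im) ^ 2 + (u.re - x.re) ^ 2) / v) ∂μ)
          - (∫ x, -2 * (u.im - x.im) / v
              * Real.exp (-((u.im - x.im) ^ 2 + (u.re - x.re) ^ 2) / v) ∂μ) ^ 2)
          / (∫ x, Real.exp (-((u.im - x.im) ^ 2 + (u.re - x.re) ^ 2) / v) ∂μ) ^ 2) + 1 :=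
    deriv2_chiLine hv Complex.measurable_im hb2 hb02 (u.re ^ 2) u.im
  rw [hfun1, hfun2, hd1, hd2]
  simp only [hswap]
  -- expand the derivative integrals into moments
  have hJ1r : (∫ x, -2 * (u.re - x.re) / v
        * Real.exp (-((u.re - x.re) ^ 2 + (u.im - x.im) ^ 2) / v) ∂μ)
      = (-2 * u.re / v) * (∫ x, Real.exp (-((u.re - x.re) ^ 2 + (u.im - x.im) ^ 2) / v) ∂μ)
        + (2 / v) * (∫ x, x.re * Real.exp (-((u.re - x.re) ^ 2 + (u.im - x.im) ^ 2) / v) ∂μ) := by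
    rw [show (fun x : ℂ => -2 * (u.re - x.re) / v
          * Real.exp (-((u.re - x.re) ^ 2 + (u.im - x.im) ^ 2) / v))
        = fun x : ℂ => (-2 * u.re / v) * Real.exp (-((u.re - x.re) ^ 2 + (u.im - x.im) ^ 2) / v)
          + (2 / v) * (x.re * Real.exp (-((u.re - x.re) ^ 2 + (u.im - x.im) ^ 2) / v))
      from funext fun x => by ring]
    exact integral_comb2 hIw hIrw _ _
  have hJ1i : (∫ x, -2 * (u.im - x.im) / v
        * Real.exp (-((u.re - x.re) ^ 2 + (u.im - x.im) ^ 2) / v) ∂μ)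
      = (-2 * u.im / v) * (∫ x, Real.exp (-((u.re - x.re) ^ 2 + (u.im - x.im) ^ 2) / v) ∂μ)
        + (2 / v) * (∫ x, x.im * Real.exp (-((u.re - x.re) ^ 2 + (u.im - x.im) ^ 2) / v) ∂μ) := by
    rw [show (fun x : ℂ => -2 * (u.im - x.im) / v
          * Real.exp (-((u.re - x.re) ^ 2 + (u.im - x.im) ^ 2) / v))
        = fun x : ℂ => (-2 * u.im / v) * Real.exp (-((u.re - x.re) ^ 2 + (u.im - x.im) ^ 2) / v)
          + (2 / v) * (x.im * Real.exp (-((u.re - x.re) ^ 2 + (u.im - x.im) ^ 2) / v))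
      from funext fun x => by ring]
    exact integral_comb2 hIw hIiw _ _
  have hJ2r : (∫ x, (4 * (u.re - x.re) ^ 2 / v ^ 2 - 2 / v)
        * Real.exp (-((u.re - x.re) ^ 2 + (u.im - x.im) ^ 2) / v) ∂μ)
      = (4 * u.re ^ 2 / v ^ 2 - 2 / v)
          * (∫ x, Real.exp (-((u.re - x.re) ^ 2 + (u.im - x.im) ^ 2) / v) ∂μ)
        + (-8 * u.re / v ^ 2)
          * (∫ x, x.re * Real.exp (-((u.re - x.re) ^ 2 + (u.im - x.im) ^ 2) / v) ∂μ)
        + (4 / v ^ 2)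
          * (∫ x, x.re ^ 2 * Real.exp (-((u.re - x.re) ^ 2 + (u.im - x.im) ^ 2) / v) ∂μ) := by
    rw [show (fun x : ℂ => (4 * (u.re - x.re) ^ 2 / v ^ 2 - 2 / v)
          * Real.exp (-((u.re - x.re) ^ 2 + (u.im - x.im) ^ 2) / v))
        = fun x : ℂ => (4 * u.re ^ 2 / v ^ 2 - 2 / v)
            * Real.exp (-((u.re - x.re) ^ 2 + (u.im - x.im) ^ 2) / v)
          + (-8 * u.re / v ^ 2)
            * (x.re * Real.exp (-((u.re - x.re) ^ 2 + (u.im - x.im) ^ 2) / v))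
          + (4 / v ^ 2)
            * (x.re ^ 2 * Real.exp (-((u.re - x.re) ^ 2 + (u.im - x.im) ^ 2) / v))
      from funext fun x => by ring]
    exact integral_comb3 hIw hIrw hIrrw _ _ _
  have hJ2i : (∫ x, (4 * (u.im - x.im) ^ 2 / v ^ 2 - 2 / v)
        * Real.exp (-((u.re - x.re) ^ 2 + (u.im - x.im) ^ 2) / v) ∂μ)
      = (4 * u.im ^ 2 / v ^ 2 - 2 / v)
          * (∫ x, Real.exp (-((u.re - x.re) ^ 2 + (u.im - x.im) ^ 2) / v) ∂μ)
        + (-8 * u.im / v ^ 2)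
          * (∫ x, x.im * Real.exp (-((u.re - x.re) ^ 2 + (u.im - x.im) ^ 2) / v) ∂μ)
        + (4 / v ^ 2)
          * (∫ x, x.im ^ 2 * Real.exp (-((u.re - x.re) ^ 2 + (u.im - x.im) ^ 2) / v) ∂μ) := by
    rw [show (fun x : ℂ => (4 * (u.im - x.im) ^ 2 / v ^ 2 - 2 / v)
          * Real.exp (-((u.re - x.re) ^ 2 + (u.im - x.im) ^ 2) / v))
        = fun x : ℂ => (4 * u.im ^ 2 / v ^ 2 - 2 / v)
            * Real.exp (-((u.re - x.re) ^ 2 + (u.im - x.im) ^ 2) / v)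
          + (-8 * u.im / v ^ 2)
            * (x.im * Real.exp (-((u.re - x.re) ^ 2 + (u.im - x.im) ^ 2) / v))
          + (4 / v ^ 2)
            * (x.im ^ 2 * Real.exp (-((u.re - x.re) ^ 2 + (u.im - x.im) ^ 2) / v))
      from funext fun x => by ring]
    exact integral_comb3 hIw hIiw hIiiw _ _ _
  rw [hJ1r, hJ1i, hJ2r, hJ2i, hpost]
  have hDpos := hD
  generalize hg0 : (∫ x, Real.exp (-((u.re - x.re) ^ 2 + (u.im - x.im) ^ 2) / v) ∂μ) = D
    at hDpos ⊢
  generalize hg1 : (∫ x, x.re * Real.exp (-((u.re - x.re) ^ 2 + (u.im - x.im) ^ 2) / v) ∂μ) = mr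
  generalize hg2 : (∫ x, x.im * Real.exp (-((u.re - x.re) ^ 2 + (u.im - x.im) ^ 2) / v) ∂μ) = mi
  generalize hg3 :
    (∫ x, x.re ^ 2 * Real.exp (-((u.re - x.re) ^ 2 + (u.im - x.im) ^ 2) / v) ∂μ) = sr
  generalize hg4 :
    (∫ x, x.im ^ 2 * Real.exp (-((u.re - x.re) ^ 2 + (u.im - x.im) ^ 2) / v) ∂μ) = si
  have hDne : D ≠ 0 := hDpos.ne'
  have hvne : v ≠ 0 := hv.ne'
  field_simp
  ring
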